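/- arXiv:1207.7025 — 2 statements merged into one kernel-verified Lean document; each statement's English description precedes it below -/
import Mathlib

section
/- Let f : ℝ → ℝ be k times continuously differentiable and let p ≤ k. Define r^{-1} f = (f_a, σ) where f_a = I^k(f^(k)) (base point a) and σ(i) = f^(i)(a) for i < k, σ(i) = 0 otherwise. Define D^p(f_a, σ) = (f_a^(p), D^p σ) with (D^p σ)(i) = σ(i+p). Then R(D^p(r^{-1} f)) = f^(p), where R(g, τ) = g + ∑_i τ(i)/i! (x-a)^i. That is, the paper's operator D^p on pairs realizes ordinary p-fold differentiation. -/
noncomputable def RL (k : ℕ) (a : ℝ) (f : ℝ → ℝ) : ℝ → ℝ :=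
  if k = 0 then f
  else fun x => (1 / (Nat.factorial (k - 1) : ℝ)) * ∫ t in a..x, f t * (x - t) ^ (k - 1)

noncomputable def Tpoly (k : ℕ) (a : ℝ) (f : ℝ → ℝ) : ℝ → ℝ :=
  fun x => ∑ i ∈ Finset.range k, iteratedDeriv i f a / (Nat.factorial i : ℝ) * (x - a) ^ i

/-! Taylor's theorem with integral remainder says that `I^k f^(k)` is `f` minus its Taylor
polynomial of order `k` at `a`. Differentiating `∑ c i / i! * (x - a)^i` shifts the coefficients,
`c i ↦ c (i + 1)`, which is exactly the shift `D^p σ`; so the polynomial parts cancel and only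
`f^(p)` remains. -/

open Finset Set
open scoped Nat

theorem hasDerivAt_sum_div_factorial_mul_pow (k : ℕ) (c : ℕ → ℝ) (a x : ℝ) :
    HasDerivAt (fun y => ∑ i ∈ range k, c i / i ! * (y - a) ^ i)
      (∑ i ∈ range k, (if i + 1 < k then c (i + 1) else 0) / i ! * (x - a) ^ i) x := by
  have hterm (i : ℕ) : HasDerivAt (fun y => c i / i ! * (y - a) ^ i)
      (c i / i ! * (i * (x - a) ^ (i - 1))) x := by
    simpa using (((hasDerivAt_id x).sub_const a).pow i).const_mul (c i / i !)
  refine (HasDerivAt.fun_sum fun i _ => hterm i).congr_deriv ?_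
  rcases k with _ | m
  · simp
  rw [sum_range_succ', sum_range_succ]
  simp only [Nat.lt_irrefl, if_false, zero_div, zero_mul, add_zero,
    CharP.cast_eq_zero, mul_zero, add_lt_add_iff_right]
  refine sum_congr rfl fun i hi => ?_
  rw [if_pos (by simpa using hi), Nat.factorial_succ]
  push_cast
  field_simp

theorem iteratedDeriv_sum_div_factorial_mul_pow (k p : ℕ) (c : ℕ → ℝ) (a : ℝ) :
    iteratedDeriv p (fun y => ∑ i ∈ range k, c i / i ! * (y - a) ^ i)
      = fun x => ∑ i ∈ range k, (if i + p < k then c (i + p) else 0) / i ! * (x - a) ^ i := by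
  induction p with
  | zero =>
    ext x
    rw [iteratedDeriv_zero]
    exact sum_congr rfl fun i hi => by rw [if_pos (by simpa using hi)]; rfl
  | succ p ih =>
    ext x
    rw [iteratedDeriv_succ, ih, (hasDerivAt_sum_div_factorial_mul_pow k _ a x).deriv]
    refine sum_congr rfl fun i _ => ?_
    rw [← add_assoc, add_right_comm]
    congr 2
    split_ifs <;> first | rfl | omega

theorem sub_Tpoly_succ_eq_integral {f : ℝ → ℝ} {n : ℕ} (hf : ContDiff ℝ (n + 1) f) (a x : ℝ) :
    f x - Tpoly (n + 1) a f x = ∫ t in a..x, (x - t) ^ n / n ! * iteratedDeriv (n + 1) f t := by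
  rcases eq_or_ne a x with rfl | hax
  · simp [Tpoly, sum_range_succ']
  have hderiv {i : ℕ} (hi : i ≤ n + 1) {t : ℝ} (ht : t ∈ uIcc a x) :
      iteratedDerivWithin i f (uIcc a x) t = iteratedDeriv i f t :=
    iteratedDerivWithin_eq_iteratedDeriv (uniqueDiffOn_uIcc hax)
      (hf.contDiffAt.of_le (by exact_mod_cast hi)) ht
  have key := taylor_integral_remainder (hf.contDiffOn (s := uIcc a x))
  simp only [taylor_within_apply, smul_eq_mul] at key
  rw [Tpoly, intervalIntegral.integral_congr fun t ht => by rw [← hderiv le_rfl ht], ← key]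
  congr 1
  refine sum_congr rfl fun i hi => ?_
  rw [hderiv (by simp at hi; omega) left_mem_uIcc]
  ring

theorem RL_iteratedDeriv_eq_sub_Tpoly {k : ℕ} {f : ℝ → ℝ} (hf : ContDiff ℝ k f) (a : ℝ) :
    RL k a (iteratedDeriv k f) = f - Tpoly k a f := by
  ext x
  rcases k with _ | n
  · simp [RL, Tpoly]
  rw [Pi.sub_apply, sub_Tpoly_succ_eq_integral hf, RL, if_neg n.succ_ne_zero, Nat.add_sub_cancel,
    ← intervalIntegral.integral_const_mul]
  congr 1 with t
  ring

theorem D_realizes_derivative (k p : ℕ) (a : ℝ) (f : ℝ → ℝ)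
    (hf : ContDiff ℝ k f) (hpk : p ≤ k) :
    ∀ x : ℝ,
      iteratedDeriv p (RL k a (iteratedDeriv k f)) x
        + ∑ i ∈ Finset.range k,
            (if i + p < k then iteratedDeriv (i + p) f a else 0)
              / (Nat.factorial i : ℝ) * (x - a) ^ i
      = iteratedDeriv p f x := by
  intro x
  have hfp : ContDiff ℝ p f := hf.of_le (by exact_mod_cast hpk)
  have hT : ContDiff ℝ p (Tpoly k a f) := by unfold Tpoly; fun_prop
  rw [RL_iteratedDeriv_eq_sub_Tpoly hf, iteratedDeriv_sub hfp.contDiffAt hT.contDiffAt]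
  unfold Tpoly
  rw [iteratedDeriv_sum_div_factorial_mul_pow, sub_add_cancel]
end

section
/- With notation as in the paper (integer orders), for f ∈ C^k and p, q natural numbers with p + q ≤ k: R(D^q(D^p(r^{-1} f))) = f^(p+q). That is, iterated application of the paper's operator on pairs composes correctly along the commuting diagram. -/
/-! Taylor's theorem with integral remainder identifies `RL k a (f⁽ᵏ⁾)` with `f` minus its Taylor
polynomial `Tpoly k a f`. Differentiating a Taylor polynomial lowers its order by one and replaces
`f` by `f'`, so the `m`-th derivative of `RL k a (f⁽ᵏ⁾)` is `f⁽ᵐ⁾ - Tpoly (k - m) a f⁽ᵐ⁾`, and the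
correction sum of the theorem is exactly `Tpoly (k - m) a f⁽ᵐ⁾` written over `range k`. -/

open Set Nat

theorem iteratedDeriv_iteratedDeriv {𝕜 F : Type*} [NontriviallyNormedField 𝕜]
    [NormedAddCommGroup F] [NormedSpace 𝕜 F] (m n : ℕ) (f : 𝕜 → F) :
    iteratedDeriv n (iteratedDeriv m f) = iteratedDeriv (m + n) f := by
  simp only [iteratedDeriv_eq_iterate, add_comm m, Function.iterate_add_apply]

theorem contDiff_Tpoly (k : ℕ) (a : ℝ) (f : ℝ → ℝ) {n : WithTop ℕ∞} :
    ContDiff ℝ n (Tpoly k a f) := by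
  unfold Tpoly
  fun_prop

theorem Tpoly_zero (a : ℝ) (f : ℝ → ℝ) : Tpoly 0 a f = 0 :=
  funext fun _ => Finset.sum_range_zero _

theorem Tpoly_succ_self (n : ℕ) (a : ℝ) (f : ℝ → ℝ) : Tpoly (n + 1) a f a = f a := by
  simp [Tpoly, Finset.sum_range_succ']

theorem hasDerivAt_Tpoly_succ (n : ℕ) (a : ℝ) (f : ℝ → ℝ) (x : ℝ) :
    HasDerivAt (Tpoly (n + 1) a f) (Tpoly n a (deriv f) x) x := by
  have hterm : ∀ i ∈ Finset.range (n + 1),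
      HasDerivAt (fun y => iteratedDeriv i f a / i ! * (y - a) ^ i)
        (iteratedDeriv i f a / i ! * (i * (x - a) ^ (i - 1))) x := fun i _ => by
    simpa using (((hasDerivAt_id x).sub_const a).pow i).const_mul (iteratedDeriv i f a / i !)
  refine (HasDerivAt.fun_sum hterm).congr_deriv ?_
  rw [Finset.sum_range_succ', Tpoly]
  simp only [CharP.cast_eq_zero, zero_mul, mul_zero, add_zero, Nat.cast_add, Nat.cast_one,
    add_tsub_cancel_right]
  refine Finset.sum_congr rfl fun i _ => ?_
  rw [← iteratedDeriv_succ', factorial_succ]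
  push_cast
  field_simp

theorem deriv_Tpoly (k : ℕ) (a : ℝ) (f : ℝ → ℝ) :
    deriv (Tpoly k a f) = Tpoly (k - 1) a (deriv f) := by
  rcases k with _ | n
  · simp [Tpoly_zero]
  · exact funext fun x => (hasDerivAt_Tpoly_succ n a f x).deriv

theorem iteratedDeriv_Tpoly (m k : ℕ) (a : ℝ) (f : ℝ → ℝ) :
    iteratedDeriv m (Tpoly k a f) = Tpoly (k - m) a (iteratedDeriv m f) := by
  induction m with
  | zero => simp
  | succ m ih =>
    rw [iteratedDeriv_succ, ih, deriv_Tpoly, ← iteratedDeriv_succ, Nat.sub_sub]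

theorem Tpoly_iteratedDeriv_eq_sum_ite (k m : ℕ) (a x : ℝ) (f : ℝ → ℝ) :
    Tpoly (k - m) a (iteratedDeriv m f) x =
      ∑ i ∈ Finset.range k,
        (if i + m < k then iteratedDeriv (i + m) f a else 0) / (i ! : ℝ) * (x - a) ^ i := by
  rw [Tpoly, ← Finset.sum_subset (Finset.range_subset_range.mpr (Nat.sub_le k m))]
  · refine Finset.sum_congr rfl fun i hi => ?_
    rw [if_pos (by grind), iteratedDeriv_iteratedDeriv, add_comm]
  · intro i _ hi
    rw [if_neg (by grind), zero_div, zero_mul]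

theorem sub_Tpoly_eq_integral {n : ℕ} {f : ℝ → ℝ} (hf : ContDiff ℝ (n + 1 : ℕ) f) (a x : ℝ) :
    f x - Tpoly (n + 1) a f x = ∫ t in a..x, ((x - t) ^ n / n !) * iteratedDeriv (n + 1) f t := by
  rcases eq_or_ne a x with rfl | hax
  · simp [Tpoly_succ_self]
  have hderiv : ∀ i ≤ n + 1, ∀ t ∈ uIcc a x,
      iteratedDerivWithin i f (uIcc a x) t = iteratedDeriv i f t := fun i hi t ht =>
    iteratedDerivWithin_eq_iteratedDeriv (uniqueDiffOn_uIcc hax)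
      (hf.contDiffAt.of_le (by exact_mod_cast hi)) ht
  calc f x - Tpoly (n + 1) a f x = f x - taylorWithinEval f n (uIcc a x) a x := by
        rw [taylor_within_apply, Tpoly]
        congr 1
        refine Finset.sum_congr rfl fun i hi => ?_
        rw [hderiv i (by grind) a left_mem_uIcc, smul_eq_mul]
        ring
    _ = ∫ t in a..x, ((x - t) ^ n / n !) • iteratedDerivWithin (n + 1) f (uIcc a x) t :=
        taylor_integral_remainder hf.contDiffOn
    _ = _ := intervalIntegral.integral_congr fun t ht => by
        rw [smul_eq_mul, hderiv (n + 1) le_rfl t ht]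

theorem RL_iteratedDeriv {n : ℕ} {f : ℝ → ℝ} (hf : ContDiff ℝ n f) (a : ℝ) :
    RL n a (iteratedDeriv n f) = f - Tpoly n a f := by
  ext x
  rcases n with _ | n
  · simp [RL, Tpoly_zero]
  · rw [RL, if_neg n.succ_ne_zero, Pi.sub_apply, sub_Tpoly_eq_integral hf,
      ← intervalIntegral.integral_const_mul, add_tsub_cancel_right]
    refine intervalIntegral.integral_congr fun t _ => ?_
    ring

theorem iteratedDeriv_RL_iteratedDeriv {k m : ℕ} {f : ℝ → ℝ} (hf : ContDiff ℝ k f) (hm : m ≤ k)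
    (a : ℝ) :
    iteratedDeriv m (RL k a (iteratedDeriv k f)) =
      iteratedDeriv m f - Tpoly (k - m) a (iteratedDeriv m f) := by
  ext x
  rw [RL_iteratedDeriv hf, iteratedDeriv_sub ((hf.of_le (by exact_mod_cast hm)).contDiffAt)
    (contDiff_Tpoly k a f).contDiffAt, iteratedDeriv_Tpoly, Pi.sub_apply]

theorem D_iterates_correctly (k p q : ℕ) (a : ℝ) (f : ℝ → ℝ)
    (hf : ContDiff ℝ k f) (hpq : p + q ≤ k) :
    ∀ x : ℝ,
      iteratedDeriv q (iteratedDeriv p (RL k a (iteratedDeriv k f))) x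
        + ∑ i ∈ Finset.range k,
            (if i + p + q < k then iteratedDeriv (i + p + q) f a else 0)
              / (Nat.factorial i : ℝ) * (x - a) ^ i
      = iteratedDeriv (p + q) f x := by
  intro x
  simp_rw [add_assoc, ← Tpoly_iteratedDeriv_eq_sum_ite, iteratedDeriv_iteratedDeriv,
    iteratedDeriv_RL_iteratedDeriv hf hpq, Pi.sub_apply, sub_add_cancel]
end
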